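/- arXiv:2112.14686 — 6 statements merged into one kernel-verified Lean document; each statement's English description precedes it below -/
import Mathlib

section
/- Let N be a von Neumann algebra on H with ΓNΓ = N. If A ∈ N and A' is a bounded operator commuting with every element of N^t (i.e. A' ∈ (N^t)'), then A'A = AA' − 2A₋A'₋; equivalently, the even parts of A and A' commute with the even and odd parts of the other, while the odd part of A anticommutes with the odd part of A'. -/
/-!
Write `A = A₊ + A₋`. Conjugating by the twist gives `Z A Z* = A₊ + i Γ A₋`, and since `Γ A Γ ∈ N`
has the same even part and the opposite odd part, also `A₊ − i Γ A₋ ∈ N^t`. So `A'` commutes with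
`A₊` and with `Γ A₋`. These are homogeneous (conjugation by `Γ` fixes them up to sign), so `Γ A' Γ`
commutes with them too, hence so do `A'₊` and `A'₋`. Finally `Γ` is cancelled from `Γ A₋`, at the
cost of a sign exactly when it passes the odd operator `A'₋`.
-/

open Complex

namespace Grading

section Involution

variable {R : Type*} [Ring R] {γ : R} (hγ : γ * γ = 1)
include hγ

theorem conj_mul_conj (x y : R) : γ * x * γ * (γ * y * γ) = γ * (x * y) * γ := by
  simp only [mul_assoc, ← mul_assoc γ γ, hγ, one_mul]

theorem conj_conj (x : R) : γ * (γ * x * γ) * γ = x := by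
  simp only [mul_assoc, hγ, mul_one, ← mul_assoc γ γ, one_mul]

theorem _root_.Commute.involution_conj {x y : R} (h : Commute x y) :
    Commute (γ * x * γ) (γ * y * γ) := by
  unfold Commute SemiconjBy
  rw [conj_mul_conj hγ, conj_mul_conj hγ, h.eq]

theorem _root_.Commute.involution_conj_left_iff {x y : R} :
    Commute (γ * x * γ) y ↔ Commute x (γ * y * γ) :=
  ⟨fun h => by simpa only [conj_conj hγ] using Commute.involution_conj hγ h,
    fun h => by simpa only [conj_conj hγ] using Commute.involution_conj hγ h⟩

theorem _root_.Commute.of_involution_mul_right {x y : R} (h₁ : Commute x γ)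
    (h₂ : Commute x (γ * y)) : Commute x y := by
  simpa only [← mul_assoc, hγ, one_mul] using h₁.mul_right h₂

theorem mul_eq_neg_of_anticomm_of_commute_mul {x y : R} (h₁ : γ * x = -(x * γ))
    (h₂ : Commute x (γ * y)) : y * x = -(x * y) := by
  have h : γ * (y * x) = γ * -(x * y) := by
    rw [← mul_assoc, ← h₂.eq, ← mul_assoc, ← neg_neg (x * γ), ← h₁, neg_mul, mul_assoc, mul_neg]
  simpa only [← mul_assoc, hγ, one_mul] using congrArg (γ * ·) h

end Involution

variable {R : Type*} [Ring R] [Algebra ℂ R]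

theorem _root_.Commute.of_add_smul_of_sub_smul {a x y : R} {c : ℂ} (hc : c ≠ 0)
    (h₁ : Commute a (x + c • y)) (h₂ : Commute a (x - c • y)) : Commute a x ∧ Commute a y := by
  have hx : x = (2⁻¹ : ℂ) • ((x + c • y) + (x - c • y)) := by module
  have hy : y = (2 * c)⁻¹ • ((x + c • y) - (x - c • y)) := by
    match_scalars <;> field_simp <;> ring
  constructor
  · rw [hx]; exact (h₁.add_right h₂).smul_right _
  · rw [hy]; exact (h₁.sub_right h₂).smul_right _

theorem mul_eq_mul_sub_of_graded {a₀ a₁ b₀ b₁ : R} (h₀₀ : Commute a₀ b₀)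
    (h₀₁ : Commute a₀ b₁) (h₁₀ : Commute a₁ b₀) (h₁₁ : a₁ * b₁ = -(b₁ * a₁)) :
    (b₀ + b₁) * (a₀ + a₁) = (a₀ + a₁) * (b₀ + b₁) - (2 : ℂ) • (a₁ * b₁) := by
  have h₁₁' : b₁ * a₁ = -(a₁ * b₁) := by rw [h₁₁, neg_neg]
  simp only [add_mul, mul_add, h₀₀.eq, h₀₁.eq, h₁₀.eq, h₁₁']
  module

variable (γ : R)

noncomputable def evenPart (a : R) : R := (2⁻¹ : ℂ) • (a + γ * a * γ)

noncomputable def oddPart (a : R) : R := (2⁻¹ : ℂ) • (a - γ * a * γ)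

noncomputable def twist : R := ((1 - I) / 2) • (1 : R) + ((1 + I) / 2) • γ

theorem evenPart_add_oddPart (a : R) : evenPart γ a + oddPart γ a = a := by
  unfold evenPart oddPart; module

variable {γ}

theorem _root_.Commute.evenPart_left {b x : R} (h : Commute b x) (h' : Commute (γ * b * γ) x) :
    Commute (evenPart γ b) x :=
  (h.add_left h').smul_left _

theorem _root_.Commute.oddPart_left {b x : R} (h : Commute b x) (h' : Commute (γ * b * γ) x) :
    Commute (oddPart γ b) x :=
  (h.sub_left h').smul_left _

section Parity

variable (hγ : γ * γ = 1)
include hγ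

theorem commute_evenPart (a : R) : Commute γ (evenPart γ a) := by
  unfold Commute SemiconjBy evenPart
  simp only [mul_smul_comm, smul_mul_assoc, mul_add, add_mul, ← mul_assoc, hγ, one_mul]
  simp only [mul_assoc, hγ, mul_one, add_comm]

theorem mul_oddPart (a : R) : γ * oddPart γ a = -(oddPart γ a * γ) := by
  unfold oddPart
  simp only [mul_smul_comm, smul_mul_assoc, mul_sub, sub_mul, ← mul_assoc, hγ, one_mul]
  simp only [mul_assoc, hγ, mul_one, ← smul_neg, neg_sub]

theorem conj_evenPart (a : R) : γ * evenPart γ a * γ = evenPart γ a := by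
  rw [(commute_evenPart hγ a).eq, mul_assoc, hγ, mul_one]

theorem conj_mul_oddPart (a : R) : γ * (γ * oddPart γ a) * γ = -(γ * oddPart γ a) := by
  rw [← mul_assoc, hγ, one_mul, mul_oddPart hγ, neg_neg]

theorem evenPart_conj (a : R) : evenPart γ (γ * a * γ) = evenPart γ a := by
  unfold evenPart
  rw [conj_conj hγ, add_comm]

theorem oddPart_conj (a : R) : oddPart γ (γ * a * γ) = -oddPart γ a := by
  unfold oddPart
  rw [conj_conj hγ, ← smul_neg, neg_sub]

theorem commute_parts_of_commute {a b : R} (he : Commute b (evenPart γ a))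
    (ho : Commute b (γ * oddPart γ a)) :
    Commute (evenPart γ a) (evenPart γ b) ∧ Commute (evenPart γ a) (oddPart γ b) ∧
      Commute (oddPart γ a) (evenPart γ b) ∧
      oddPart γ a * oddPart γ b = -(oddPart γ b * oddPart γ a) := by
  have he' : Commute (γ * b * γ) (evenPart γ a) :=
    (Commute.involution_conj_left_iff hγ).2 (by rwa [conj_evenPart hγ])
  have ho' : Commute (γ * b * γ) (γ * oddPart γ a) :=
    (Commute.involution_conj_left_iff hγ).2 (by rw [conj_mul_oddPart hγ]; exact ho.neg_right)
  refine ⟨(he.evenPart_left he').symm, (he.oddPart_left he').symm, ?_, ?_⟩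
  · exact (Commute.of_involution_mul_right hγ (commute_evenPart hγ b).symm
      (ho.evenPart_left ho')).symm
  · exact mul_eq_neg_of_anticomm_of_commute_mul hγ (mul_oddPart hγ b) (ho.oddPart_left ho')

end Parity

section Twist

variable [StarRing R] [StarModule ℂ R] (hsa : IsSelfAdjoint γ) (hγ : γ * γ = 1)
include hsa

theorem star_twist : star (twist γ) = ((1 + I) / 2) • (1 : R) + ((1 - I) / 2) • γ := by
  unfold twist
  rw [star_add, star_smul, star_smul, star_one, hsa.star_eq]
  congr 2 <;> simp [Complex.ext_iff]

include hγ

theorem twist_mul_mul_star (b : R) :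
    twist γ * b * star (twist γ) = evenPart γ b + I • (γ * oddPart γ b) := by
  rw [star_twist hsa]
  unfold twist evenPart oddPart
  simp only [mul_add, add_mul, mul_sub, smul_mul_assoc, mul_smul_comm, one_mul, mul_one,
    smul_add, smul_sub, smul_smul, ← mul_assoc, hγ]
  match_scalars <;> ring_nf <;> simp only [I_sq] <;> ring

theorem twist_mul_conj_mul_star (b : R) :
    twist γ * (γ * b * γ) * star (twist γ) = evenPart γ b - I • (γ * oddPart γ b) := by
  rw [twist_mul_mul_star hsa hγ, evenPart_conj hγ, oddPart_conj hγ, mul_neg, smul_neg,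
    sub_eq_add_neg]

end Twist

end Grading

open Grading

/-- Let `N` be a von Neumann algebra on `H` with `ΓNΓ = N`. If `A ∈ N` and
`A'` is a bounded operator commuting with every element of `N^t` (i.e. `A' ∈ (N^t)'`), then
`A'A = AA' − 2A₋A'₋`; equivalently, the even parts of `A` and `A'` commute with the even and
odd parts of the other, while the odd part of `A` anticommutes with the odd part of `A'`. -/
theorem graded_commutation_relation
    {H : Type*} [NormedAddCommGroup H] [InnerProductSpace ℂ H] [CompleteSpace H]
    (Γ : H →L[ℂ] H) (hΓsa : ContinuousLinearMap.adjoint Γ = Γ) (hΓ2 : Γ * Γ = 1)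
    (Z : H →L[ℂ] H)
    (hZ : Z = ((1 - Complex.I) / 2) • (1 : H →L[ℂ] H) + ((1 + Complex.I) / 2) • Γ)
    (N : VonNeumannAlgebra H)
    (hN : ∀ B ∈ N, Γ * B * Γ ∈ N)
    (A A' : H →L[ℂ] H) (hA : A ∈ N)
    (hA' : A' ∈ Set.centralizer
      ((fun B => Z * B * ContinuousLinearMap.adjoint Z) '' (N : Set (H →L[ℂ] H))))
    -- even and odd parts
    (Ap Am A'p A'm : H →L[ℂ] H)
    (hAp : Ap = (2⁻¹ : ℂ) • (A + Γ * A * Γ)) (hAm : Am = (2⁻¹ : ℂ) • (A - Γ * A * Γ))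
    (hA'p : A'p = (2⁻¹ : ℂ) • (A' + Γ * A' * Γ)) (hA'm : A'm = (2⁻¹ : ℂ) • (A' - Γ * A' * Γ)) :
    A' * A = A * A' - (2 : ℂ) • (Am * A'm) ∧
    Ap * A'p = A'p * Ap ∧
    Ap * A'm = A'm * Ap ∧
    Am * A'p = A'p * Am ∧
    Am * A'm = - (A'm * Am) := by
  have hsa : IsSelfAdjoint Γ := (ContinuousLinearMap.star_eq_adjoint Γ).trans hΓsa
  have hZ' : Z = twist Γ := hZ
  simp only [← ContinuousLinearMap.star_eq_adjoint, hZ'] at hA'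
  have hcomm := Commute.of_add_smul_of_sub_smul I_ne_zero
    (by rw [← twist_mul_mul_star hsa hΓ2]; exact (hA' _ ⟨A, hA, rfl⟩).symm)
    (by rw [← twist_mul_conj_mul_star hsa hΓ2]; exact (hA' _ ⟨_, hN A hA, rfl⟩).symm)
  obtain ⟨hpp, hpm, hmp, hmm⟩ := commute_parts_of_commute hΓ2 hcomm.1 hcomm.2
  subst hAp hAm hA'p hA'm
  refine ⟨?_, hpp.eq, hpm.eq, hmp.eq, hmm⟩
  have h := mul_eq_mul_sub_of_graded hpp hpm hmp hmm
  rwa [evenPart_add_oddPart, evenPart_add_oddPart] at h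
end

section
/- Let J be an antiunitary involution on H (a conjugate-linear, surjective, inner-product-conjugating map with J² = 1) that commutes with Γ. Then ZJ is again an antiunitary involution, and for every bounded operator A on H one has (ZJ)(ZAZ*)(ZJ) = JAJ. In particular, if N is a von Neumann algebra with ΓNΓ = N and JNJ = N', then (ZJ) N^t (ZJ) = N'. -/
open scoped InnerProductSpace ComplexConjugate

/-!
Since `Γ` is a self-adjoint involution, `Z = a • 1 + b • Γ` with `a = (1 - i)/2`, `b = conj a` is
unitary with `Z* = b • 1 + a • Γ`, and an antilinear `J` commuting with `Γ` conjugates the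
coefficients, so `J Z = Z* J`. Hence `K = Z J` satisfies `K K = Z Z* J J = 1`, it conjugates inner
products because `Z` preserves them, and `K (Z A Z*) K = Z J Z A J = Z Z* J A J = J A J`.
-/

section TwistInStarAlgebra

variable {A : Type*} [Ring A] [Algebra ℂ A] {g : A}

lemma smul_one_add_smul_mul_smul_one_add_smul (hg : g * g = 1) (a b c d : ℂ) :
    (a • (1 : A) + b • g) * (c • 1 + d • g) = (a * c + b * d) • 1 + (a * d + b * c) • g := by
  simp only [add_mul, mul_add, smul_mul_assoc, mul_smul_comm, one_mul, mul_one, hg]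
  module

variable [StarRing A] [StarModule ℂ A]

lemma star_smul_one_add_smul (hg : IsSelfAdjoint g) (a b : ℂ) :
    star (a • (1 : A) + b • g) = conj a • 1 + conj b • g := by
  rw [star_add, star_smul, star_smul, star_one, hg.star_eq]
  rfl

noncomputable def twist (g : A) : A := ((1 - Complex.I) / 2) • 1 + ((1 + Complex.I) / 2) • g

lemma star_twist (hg : IsSelfAdjoint g) :
    star (twist g) = ((1 + Complex.I) / 2) • 1 + ((1 - Complex.I) / 2) • g := by
  have hconj : conj ((1 - Complex.I) / 2) = (1 + Complex.I) / 2 := by simp [map_ofNat]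
  have hconj' : conj ((1 + Complex.I) / 2) = (1 - Complex.I) / 2 := by
    simp [map_ofNat, sub_eq_add_neg]
  rw [twist, star_smul_one_add_smul hg, hconj, hconj']

lemma twist_mem_unitary (hg : IsSelfAdjoint g) (hg2 : g * g = 1) : twist g ∈ unitary A := by
  have h1 : (1 + Complex.I) / 2 * ((1 - Complex.I) / 2)
      + (1 - Complex.I) / 2 * ((1 + Complex.I) / 2) = 1 := by
    linear_combination (-1 / 2 : ℂ) * Complex.I_sq
  have h0 : (1 + Complex.I) / 2 * ((1 + Complex.I) / 2)
      + (1 - Complex.I) / 2 * ((1 - Complex.I) / 2) = 0 := by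
    linear_combination (1 / 2 : ℂ) * Complex.I_sq
  rw [Unitary.mem_iff, star_twist hg, twist, smul_one_add_smul_mul_smul_one_add_smul hg2,
    smul_one_add_smul_mul_smul_one_add_smul hg2, h1, h0, add_comm (_ * _), h1,
    add_comm (_ * _), h0]
  simp

end TwistInStarAlgebra

section Antiunitary

variable {H : Type*} [NormedAddCommGroup H] [InnerProductSpace ℂ H]

structure IsAntiunitaryInvolution (J : H → H) : Prop where
  map_add : ∀ x y, J (x + y) = J x + J y
  map_smul : ∀ (c : ℂ) (x : H), J (c • x) = conj c • J x
  involutive : Function.Involutive J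
  inner_map_map : ∀ x y : H, ⟪J x, J y⟫_ℂ = ⟪y, x⟫_ℂ

variable {J : H → H}

namespace IsAntiunitaryInvolution

lemma apply_smul_one_add_smul_apply (hJ : IsAntiunitaryInvolution J) {Γ : H →L[ℂ] H}
    (hJΓ : ∀ x, J (Γ x) = Γ (J x)) (a b : ℂ) (x : H) :
    J ((a • (1 : H →L[ℂ] H) + b • Γ) x) = (conj a • (1 : H →L[ℂ] H) + conj b • Γ) (J x) := by
  simp only [add_apply, smul_apply, one_apply_eq_self, hJ.map_add, hJ.map_smul, hJΓ]

end IsAntiunitaryInvolution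

variable [CompleteSpace H] {U : H →L[ℂ] H}

lemma star_apply_apply_of_mem_unitary (hU : U ∈ unitary (H →L[ℂ] H)) (x : H) :
    star U (U x) = x := by
  simpa using congr($(Unitary.star_mul_self_of_mem hU) x)

lemma apply_star_apply_of_mem_unitary (hU : U ∈ unitary (H →L[ℂ] H)) (x : H) :
    U (star U x) = x := by
  simpa using congr($(Unitary.mul_star_self_of_mem hU) x)

namespace IsAntiunitaryInvolution

lemma apply_twist_apply (hJ : IsAntiunitaryInvolution J) {Γ : H →L[ℂ] H} (hΓ : IsSelfAdjoint Γ)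
    (hJΓ : ∀ x, J (Γ x) = Γ (J x)) (x : H) :
    J (twist Γ x) = star (twist Γ) (J x) := by
  rw [twist, hJ.apply_smul_one_add_smul_apply hJΓ, star_smul_one_add_smul hΓ]

lemma unitary_comp (hJ : IsAntiunitaryInvolution J) (hU : U ∈ unitary (H →L[ℂ] H))
    (hJU : ∀ x, J (U x) = star U (J x)) : IsAntiunitaryInvolution fun x => U (J x) where
  map_add x y := by simp only [hJ.map_add, U.map_add]
  map_smul c x := by simp only [hJ.map_smul, U.map_smul]
  involutive x := by dsimp only; rw [hJU, apply_star_apply_of_mem_unitary hU, hJ.involutive]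
  inner_map_map x y := by
    rw [ContinuousLinearMap.inner_map_map_of_mem_unitary hU, hJ.inner_map_map]

end IsAntiunitaryInvolution

lemma unitary_comp_conj_apply (hU : U ∈ unitary (H →L[ℂ] H))
    (hJU : ∀ x, J (U x) = star U (J x)) (A : H →L[ℂ] H) (x : H) :
    U (J ((U * A * star U) (U (J x)))) = J (A (J x)) := by
  simp only [mul_apply_eq_comp]
  rw [star_apply_apply_of_mem_unitary hU, hJU, apply_star_apply_of_mem_unitary hU]

end Antiunitary

/-- Let `J` be an antiunitary involution on `H` (a conjugate-linear, surjective,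
inner-product-conjugating map with `J² = 1`) that commutes with `Γ`. Then `ZJ` is again an
antiunitary involution, and for every bounded operator `A` on `H` one has
`(ZJ)(ZAZ*)(ZJ) = JAJ`. In particular, if `N` is a von Neumann algebra with `ΓNΓ = N` and
`JNJ = N'`, then `(ZJ) N^t (ZJ) = N'`. -/
theorem twisted_reflection_properties
    {H : Type*} [NormedAddCommGroup H] [InnerProductSpace ℂ H] [CompleteSpace H]
    (Γ : H →L[ℂ] H) (hΓsa : ContinuousLinearMap.adjoint Γ = Γ) (hΓ2 : Γ * Γ = 1)
    (Z : H →L[ℂ] H)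
    (hZ : Z = ((1 - Complex.I) / 2) • (1 : H →L[ℂ] H) + ((1 + Complex.I) / 2) • Γ)
    -- J is an antiunitary involution commuting with Γ
    (J : H → H)
    (hJadd : ∀ x y, J (x + y) = J x + J y)
    (hJsmul : ∀ (c : ℂ) (x : H), J (c • x) = (starRingEnd ℂ c) • J x)
    (hJinv : ∀ x, J (J x) = x)
    (hJinner : ∀ x y : H, ⟪J x, J y⟫_ℂ = ⟪y, x⟫_ℂ)
    (hJΓ : ∀ x, J (Γ x) = Γ (J x))
    -- the composite map K = Z ∘ J
    (K : H → H) (hK : K = fun x => Z (J x)) :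
    -- K is an antiunitary involution
    (∀ x y, K (x + y) = K x + K y) ∧
    (∀ (c : ℂ) (x : H), K (c • x) = (starRingEnd ℂ c) • K x) ∧
    (∀ x, K (K x) = x) ∧
    (∀ x y : H, ⟪K x, K y⟫_ℂ = ⟪y, x⟫_ℂ) ∧
    -- (ZJ)(Z A Z*)(ZJ) = J A J
    (∀ (A : H →L[ℂ] H) (x : H),
      K ((Z * A * ContinuousLinearMap.adjoint Z) (K x)) = J (A (J x))) ∧
    -- if in addition JNJ = N', then (ZJ) N^t (ZJ) = N'
    (∀ N : VonNeumannAlgebra H,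
      (∀ B ∈ N, Γ * B * Γ ∈ N) →
      (∀ B' : H →L[ℂ] H, B' ∈ N.commutant ↔ ∃ B ∈ N, ∀ x, B' x = J (B (J x))) →
      (∀ B' : H →L[ℂ] H, B' ∈ N.commutant ↔
        ∃ B ∈ N, ∀ x, B' x = K ((Z * B * ContinuousLinearMap.adjoint Z) (K x)))) := by
  subst hK
  have hΓ : IsSelfAdjoint Γ := hΓsa
  have hJ : IsAntiunitaryInvolution J := ⟨hJadd, hJsmul, hJinv, hJinner⟩
  have hU : Z ∈ unitary (H →L[ℂ] H) := hZ ▸ twist_mem_unitary hΓ hΓ2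
  have hJZ : ∀ x, J (Z x) = star Z (J x) := hZ ▸ hJ.apply_twist_apply hΓ hJΓ
  have hK := hJ.unitary_comp hU hJZ
  have hconj := unitary_comp_conj_apply hU hJZ
  simp only [← ContinuousLinearMap.star_eq_adjoint]
  refine ⟨hK.map_add, hK.map_smul, hK.involutive, hK.inner_map_map, hconj, ?_⟩
  intro N _ hcomm B'
  simp only [hcomm, hconj]
end

section
/- If V is a left disorder operator, then V F V* ⊆ F, where F = (P^t)' ∩ Q' is the local field algebra; that is, conjugation by a left disorder operator preserves the local field algebra. -/
/-! Conjugation by `V` fixes `Q` pointwise and, as `V` commutes with `Γ` and hence with `Z`, sends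
`Z (Γ B Γ) Z* ∈ P^t` to `Z B Z*`.  So `P^t` and `Q` lie in their own images under `V ⬝ V*`, and
conjugation by an isometry maps the commutant of a set into the commutant of its image. -/

variable {H : Type*} [NormedAddCommGroup H] [InnerProductSpace ℂ H] [CompleteSpace H]

/-- A left disorder operator (for the pair `P`, `Q`): a unitary `V` commuting with `Γ`
that implements `Γ ⬝ Γ` on `P` and the identity on `Q`. -/
def IsLeftDisorder (Γ : H →L[ℂ] H) (P Q : VonNeumannAlgebra H) (V : H →L[ℂ] H) : Prop :=
  (ContinuousLinearMap.adjoint V * V = 1 ∧ V * ContinuousLinearMap.adjoint V = 1) ∧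
  V * Γ = Γ * V ∧
  (∀ A ∈ P, V * A * ContinuousLinearMap.adjoint V = Γ * A * Γ) ∧
  (∀ A ∈ Q, V * A * ContinuousLinearMap.adjoint V = A)

/-- A right disorder operator (for the pair `P`, `Q`): a unitary `V` commuting with `Γ`
that implements the identity on `P` and `Γ ⬝ Γ` on `Q`. -/
def IsRightDisorder (Γ : H →L[ℂ] H) (P Q : VonNeumannAlgebra H) (V : H →L[ℂ] H) : Prop :=
  (ContinuousLinearMap.adjoint V * V = 1 ∧ V * ContinuousLinearMap.adjoint V = 1) ∧
  V * Γ = Γ * V ∧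
  (∀ A ∈ P, V * A * ContinuousLinearMap.adjoint V = A) ∧
  (∀ A ∈ Q, V * A * ContinuousLinearMap.adjoint V = Γ * A * Γ)

section Monoid

variable {M : Type*} [Monoid M]

theorem conj_mul_conj_of_mul_eq_one {V W : M} (hWV : W * V = 1) (X Y : M) :
    V * X * W * (V * Y * W) = V * (X * Y) * W := by
  calc V * X * W * (V * Y * W) = V * X * (W * V) * Y * W := by simp only [mul_assoc]
    _ = V * (X * Y) * W := by rw [hWV, mul_one, mul_assoc V]

theorem conj_mem_centralizer_image {V W A : M} {S : Set M} (hWV : W * V = 1)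
    (hA : A ∈ Set.centralizer S) :
    V * A * W ∈ Set.centralizer ((fun X => V * X * W) '' S) := by
  rintro _ ⟨X, hX, rfl⟩
  rw [conj_mul_conj_of_mul_eq_one hWV, conj_mul_conj_of_mul_eq_one hWV, hA X hX]

theorem conj_conj_of_mul_self_eq_one {Γ : M} (hΓ : Γ * Γ = 1) (B : M) :
    Γ * (Γ * B * Γ) * Γ = B := by
  simp only [← mul_assoc, hΓ, one_mul]
  rw [mul_assoc, hΓ, mul_one]

theorem Commute.conj_star_comm [StarMul M] {V Z : M} (h : Commute V Z) (C : M) :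
    V * (Z * C * star Z) * star V = Z * (V * C * star V) * star Z := by
  have h' : star Z * star V = star V * star Z := h.star_star.eq.symm
  simp only [← mul_assoc, h.eq]
  simp only [mul_assoc, h']

end Monoid

theorem leftDisorder_conj_mem_localFieldAlgebra_general
    (Γ : H →L[ℂ] H) (hΓ2 : Γ * Γ = 1)
    (Z : H →L[ℂ] H)
    (hZ : Z = ((1 - Complex.I) / 2) • (1 : H →L[ℂ] H) + ((1 + Complex.I) / 2) • Γ)
    (P Q : VonNeumannAlgebra H)
    (hPΓ : ∀ A ∈ P, Γ * A * Γ ∈ P)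
    -- the local field algebra F = (P^t)' ∩ Q'
    (F : Set (H →L[ℂ] H))
    (hF : F = Set.centralizer
        ((fun B => Z * B * ContinuousLinearMap.adjoint Z) '' (P : Set (H →L[ℂ] H)))
      ∩ Set.centralizer (Q : Set (H →L[ℂ] H)))
    (V : H →L[ℂ] H) (hV : IsLeftDisorder Γ P Q V) :
    ∀ A ∈ F, V * A * ContinuousLinearMap.adjoint V ∈ F := by
  obtain ⟨⟨hVV, -⟩, hVΓ, hVP, hVQ⟩ := hV
  simp only [← ContinuousLinearMap.star_eq_adjoint] at hF hVV hVP hVQ ⊢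
  have hVZ : Commute V Z :=
    hZ ▸ ((Commute.one_right V).smul_right _).add_right (Commute.smul_right hVΓ _)
  have hPt : (fun B => Z * B * star Z) '' (P : Set (H →L[ℂ] H)) ⊆
      (fun X => V * X * star V) '' ((fun B => Z * B * star Z) '' P) := by
    rintro _ ⟨B, hB, rfl⟩
    refine ⟨_, ⟨Γ * B * Γ, hPΓ B hB, rfl⟩, ?_⟩
    simp only [hVZ.conj_star_comm, hVP _ (hPΓ B hB), conj_conj_of_mul_self_eq_one hΓ2]
  have hQ : (Q : Set (H →L[ℂ] H)) ⊆ (fun X => V * X * star V) '' Q :=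
    fun X hX => ⟨X, hX, hVQ X hX⟩
  intro A hA
  rw [hF] at hA ⊢
  exact ⟨Set.centralizer_subset hPt (conj_mem_centralizer_image hVV hA.1),
    Set.centralizer_subset hQ (conj_mem_centralizer_image hVV hA.2)⟩

/-- If `V` is a left disorder operator, then `V F V* ⊆ F`, where
`F = (P^t)' ∩ Q'` is the local field algebra: conjugation by a left disorder operator preserves
the local field algebra. -/
theorem leftDisorder_conj_mem_localFieldAlgebra
    (Γ : H →L[ℂ] H) (hΓsa : ContinuousLinearMap.adjoint Γ = Γ) (hΓ2 : Γ * Γ = 1)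
    (Z : H →L[ℂ] H)
    (hZ : Z = ((1 - Complex.I) / 2) • (1 : H →L[ℂ] H) + ((1 + Complex.I) / 2) • Γ)
    (P Q : VonNeumannAlgebra H)
    (hPΓ : ∀ A ∈ P, Γ * A * Γ ∈ P) (hQΓ : ∀ A ∈ Q, Γ * A * Γ ∈ Q)
    (hPQ : (P : Set (H →L[ℂ] H)) ⊆ Set.centralizer (Q : Set (H →L[ℂ] H)))
    -- the local field algebra F = (P^t)' ∩ Q'
    (F : Set (H →L[ℂ] H))
    (hF : F = Set.centralizer
        ((fun B => Z * B * ContinuousLinearMap.adjoint Z) '' (P : Set (H →L[ℂ] H)))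
      ∩ Set.centralizer (Q : Set (H →L[ℂ] H)))
    (V : H →L[ℂ] H) (hV : IsLeftDisorder Γ P Q V) :
    ∀ A ∈ F, V * A * ContinuousLinearMap.adjoint V ∈ F :=
  leftDisorder_conj_mem_localFieldAlgebra_general Γ hΓ2 Z hZ P Q hPΓ F hF V hV
end

section
/- If V and V̂ are both left disorder operators, then there exists an even unitary operator A ∈ F (i.e. A ∈ (P^t)' ∩ Q' with ΓAΓ = A) such that V = A V̂. In other words, a left disorder operator is unique up to multiplication by an even unitary element of the local field algebra F. -/
/-!
Put `A := V V̂*`. Since `V` and `V̂` implement the same map `x ↦ ΓxΓ` on `P` and the identity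
on `Q`, `A` commutes with `ΓPΓ` and with `Q`. As `V` and `V̂` commute with `Γ`, so does `A`;
hence `A` is even, commutes with `P = Γ(ΓPΓ)Γ`, and commutes with `Z`, a combination of `1`
and `Γ`. Being unitary, `A` then also commutes with `Z*`, and therefore with `P^t = Z P Z*`.
-/

variable {H : Type*} [NormedAddCommGroup H] [InnerProductSpace ℂ H] [CompleteSpace H]

section StarMonoid

variable {R : Type*} [Monoid R]

theorem Commute.of_conj_of_mul_self_eq_one {a g x : R} (hg : g * g = 1) (hag : Commute a g)
    (h : Commute a (g * x * g)) : Commute a x := by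
  have hx : g * (g * x * g) * g = x := by
    rw [← mul_assoc, ← mul_assoc, hg, one_mul, mul_assoc, hg, mul_one]
  simpa only [hx] using (hag.mul_right h).mul_right hag

variable [StarMul R]

theorem Commute.star_left_of_mem_unitary {u x : R} (hu : u ∈ unitary R) (h : Commute u x) :
    Commute (star u) x :=
  Commute.units_inv_left (u := Unitary.toUnits ⟨u, hu⟩) h

theorem Commute.star_right_of_mem_unitary {u x : R} (hu : u ∈ unitary R) (h : Commute u x) :
    Commute u (star x) :=
  (h.star_left_of_mem_unitary hu).star_right

theorem commute_mul_star_of_conj_eq {u v x y : R} (hu : u ∈ unitary R) (hv : v ∈ unitary R)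
    (hux : u * x * star u = y) (hvx : v * x * star v = y) : Commute (u * star v) y := by
  calc u * star v * y = u * star v * (v * x * star v) := by rw [hvx]
    _ = u * x * star v := by
      rw [mul_assoc u, ← mul_assoc (star v), ← mul_assoc (star v),
        Unitary.star_mul_self_of_mem hv, one_mul, ← mul_assoc]
    _ = u * x * star u * (u * star v) := by
      rw [mul_assoc (u * x), ← mul_assoc (star u), Unitary.star_mul_self_of_mem hu, one_mul]
    _ = y * (u * star v) := by rw [hux]

end StarMonoid

namespace IsLeftDisorder

variable {Γ V : H →L[ℂ] H} {P Q : VonNeumannAlgebra H}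

theorem mem_unitary (hV : IsLeftDisorder Γ P Q V) : V ∈ unitary (H →L[ℂ] H) :=
  hV.1

theorem commute (hV : IsLeftDisorder Γ P Q V) : Commute V Γ :=
  hV.2.1

theorem conj_of_mem_left (hV : IsLeftDisorder Γ P Q V) {A : H →L[ℂ] H} (hA : A ∈ P) :
    V * A * star V = Γ * A * Γ :=
  hV.2.2.1 A hA

theorem conj_of_mem_right (hV : IsLeftDisorder Γ P Q V) {A : H →L[ℂ] H} (hA : A ∈ Q) :
    V * A * star V = A :=
  hV.2.2.2 A hA

end IsLeftDisorder

theorem leftDisorder_unique_up_to_even_unitary_general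
    (Γ : H →L[ℂ] H) (hΓ2 : Γ * Γ = 1)
    (Z : H →L[ℂ] H)
    (hZ : Z = ((1 - Complex.I) / 2) • (1 : H →L[ℂ] H) + ((1 + Complex.I) / 2) • Γ)
    (P Q : VonNeumannAlgebra H)
    -- the local field algebra F = (P^t)' ∩ Q'
    (F : Set (H →L[ℂ] H))
    (hF : F = Set.centralizer
        ((fun B => Z * B * ContinuousLinearMap.adjoint Z) '' (P : Set (H →L[ℂ] H)))
      ∩ Set.centralizer (Q : Set (H →L[ℂ] H)))
    (V V' : H →L[ℂ] H) (hV : IsLeftDisorder Γ P Q V) (hV' : IsLeftDisorder Γ P Q V') :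
    ∃ A ∈ F,
      (ContinuousLinearMap.adjoint A * A = 1 ∧ A * ContinuousLinearMap.adjoint A = 1) ∧
      Γ * A * Γ = A ∧
      V = A * V' := by
  have hA : V * star V' ∈ unitary (H →L[ℂ] H) :=
    mul_mem hV.mem_unitary (Unitary.star_mem hV'.mem_unitary)
  have hAΓ : Commute (V * star V') Γ :=
    hV.commute.mul_left (hV'.commute.star_left_of_mem_unitary hV'.mem_unitary)
  have hAP (B : H →L[ℂ] H) (hB : B ∈ P) : Commute (V * star V') B :=
    hAΓ.of_conj_of_mul_self_eq_one hΓ2 <| commute_mul_star_of_conj_eq hV.mem_unitary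
      hV'.mem_unitary (hV.conj_of_mem_left hB) (hV'.conj_of_mem_left hB)
  have hAQ (B : H →L[ℂ] H) (hB : B ∈ Q) : Commute (V * star V') B :=
    commute_mul_star_of_conj_eq hV.mem_unitary hV'.mem_unitary
      (hV.conj_of_mem_right hB) (hV'.conj_of_mem_right hB)
  have hAZ : Commute (V * star V') Z := hZ ▸
    ((Commute.one_right _).smul_right _).add_right (hAΓ.smul_right _)
  refine ⟨V * star V', ?_, hA, ?_, ?_⟩
  · subst hF
    refine ⟨?_, fun B hB => (hAQ B hB).eq.symm⟩
    rintro _ ⟨B, hB, rfl⟩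
    exact (((hAZ.mul_right (hAP B hB)).mul_right
      (hAZ.star_right_of_mem_unitary hA))).eq.symm
  · rw [← hAΓ.eq, mul_assoc, hΓ2, mul_one]
  · rw [mul_assoc, Unitary.star_mul_self_of_mem hV'.mem_unitary, mul_one]

/-- If `V` and `V̂` are both left disorder operators, then there exists an even
unitary `A ∈ F = (P^t)' ∩ Q'` such that `V = A V̂`: a left disorder operator is unique up to
multiplication by an even unitary element of the local field algebra. -/
theorem leftDisorder_unique_up_to_even_unitary
    (Γ : H →L[ℂ] H) (hΓsa : ContinuousLinearMap.adjoint Γ = Γ) (hΓ2 : Γ * Γ = 1)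
    (Z : H →L[ℂ] H)
    (hZ : Z = ((1 - Complex.I) / 2) • (1 : H →L[ℂ] H) + ((1 + Complex.I) / 2) • Γ)
    (P Q : VonNeumannAlgebra H)
    (hPΓ : ∀ A ∈ P, Γ * A * Γ ∈ P) (hQΓ : ∀ A ∈ Q, Γ * A * Γ ∈ Q)
    (hPQ : (P : Set (H →L[ℂ] H)) ⊆ Set.centralizer (Q : Set (H →L[ℂ] H)))
    -- the local field algebra F = (P^t)' ∩ Q'
    (F : Set (H →L[ℂ] H))
    (hF : F = Set.centralizer
        ((fun B => Z * B * ContinuousLinearMap.adjoint Z) '' (P : Set (H →L[ℂ] H)))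
      ∩ Set.centralizer (Q : Set (H →L[ℂ] H)))
    (V V' : H →L[ℂ] H) (hV : IsLeftDisorder Γ P Q V) (hV' : IsLeftDisorder Γ P Q V') :
    ∃ A ∈ F,
      (ContinuousLinearMap.adjoint A * A = 1 ∧ A * ContinuousLinearMap.adjoint A = 1) ∧
      Γ * A * Γ = A ∧
      V = A * V' :=
  leftDisorder_unique_up_to_even_unitary_general Γ hΓ2 Z hZ P Q F hF V V' hV hV'
end

section
/- Suppose V is a left disorder operator. If A ∈ F = (P^t)' ∩ Q' is odd (ΓAΓ = −A), then AV lies in P' ∩ Q' and is odd; conversely, if B ∈ P' ∩ Q' is odd, then BV* lies in F and is odd. Hence right multiplication by V is a bijection from the set of odd elements of the twisted local algebra F = (P^t)' ∩ Q' onto the set of odd elements of the untwisted local algebra P' ∩ Q'. -/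
variable {H : Type*} [NormedAddCommGroup H] [InnerProductSpace ℂ H] [CompleteSpace H]

/-!
For an odd operator `A` the twist acts very simply: since `ΓA = -AΓ`, one computes
`Z* A Z = i AΓ`, so `A` commutes with `P^t = Z P Z*` exactly when `AΓ` commutes with `P`.
A left disorder operator `V` satisfies `ΓV ∈ P'` and `V ∈ Q'`, hence `AV = (AΓ)(ΓV)` lies in
`P' ∩ Q'`; conversely `(BV*)Γ = B (ΓV)*` lies in `P'` for `B ∈ P'`.
-/

open Complex Set

theorem Set.smul_mem_centralizer_iff {𝕜 A : Type*} [Field 𝕜] [Ring A] [Algebra 𝕜 A] {c : 𝕜}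
    (hc : c ≠ 0) {s : Set A} {a : A} : c • a ∈ s.centralizer ↔ a ∈ s.centralizer :=
  ⟨fun h => by simpa [smul_smul, inv_mul_cancel₀ hc] using smul_mem_centralizer c⁻¹ h,
    smul_mem_centralizer c⟩

section Ring

variable {R : Type*} [Ring R]

theorem mul_eq_neg_mul_of_conj_eq_neg {Γ A : R} (hΓ2 : Γ * Γ = 1) (hA : Γ * A * Γ = -A) :
    Γ * A = -(A * Γ) := by
  rw [← neg_mul, ← hA, mul_assoc _ Γ, hΓ2, mul_one]

theorem conj_mul_eq_neg_of_commute {Γ A V : R} (hA : Γ * A * Γ = -A) (hV : Commute V Γ) :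
    Γ * (A * V) * Γ = -(A * V) := by
  rw [mul_assoc, mul_assoc, hV.eq, ← mul_assoc, ← mul_assoc, hA, neg_mul]

end Ring

section StarRing

variable {R : Type*} [Ring R] [StarRing R] {u : R}

theorem mem_centralizer_image_conj_iff (hu : u ∈ unitary R) {S : Set R} {a : R} :
    a ∈ centralizer ((fun b => u * b * star u) '' S) ↔ star u * a * u ∈ centralizer S := by
  have h1 : star u * u = 1 := Unitary.star_mul_self_of_mem hu
  have h2 : u * star u = 1 := Unitary.mul_star_self_of_mem hu
  simp only [mem_centralizer_iff, forall_mem_image]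
  refine forall₂_congr fun b _ => ⟨fun h => ?_, fun h => ?_⟩
  · calc b * (star u * a * u) = star u * (u * b * star u * a) * u := by
          simp only [mul_assoc, ← mul_assoc (star u) u, h1, one_mul]
    _ = star u * a * u * b := by
          rw [h]; simp only [mul_assoc, h1, mul_one]
  · calc u * b * star u * a = u * (b * (star u * a * u)) * star u := by
          simp only [mul_assoc, h2, mul_one]
    _ = a * (u * b * star u) := by
          rw [h]; simp only [← mul_assoc, h2, one_mul]

theorem mul_eq_mul_of_conj_eq (hu : star u * u = 1) {b c : R} (h : u * b * star u = c) :
    u * b = c * u := by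
  rw [← h, mul_assoc _ (star u), hu, mul_one]

theorem mul_mem_centralizer_of_conj_eq {Γ : R} (hΓ2 : Γ * Γ = 1) (hu : star u * u = 1)
    {S : Set R} (h : ∀ b ∈ S, u * b * star u = Γ * b * Γ) : Γ * u ∈ centralizer S := by
  intro b hb
  rw [mul_assoc, mul_eq_mul_of_conj_eq hu (h b hb)]
  simp only [← mul_assoc, hΓ2, one_mul]

theorem mem_centralizer_of_conj_eq (hu : star u * u = 1) {S : Set R}
    (h : ∀ b ∈ S, u * b * star u = b) : u ∈ centralizer S :=
  fun b hb => (mul_eq_mul_of_conj_eq hu (h b hb)).symm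

end StarRing

section Twist

variable {R : Type*} [Ring R] [StarRing R] [Algebra ℂ R] [StarModule ℂ R] {Γ : R}

noncomputable def twistOp (Γ : R) : R := ((1 - I) / 2) • (1 : R) + ((1 + I) / 2) • Γ

noncomputable def twistConj (Γ b : R) : R := twistOp Γ * b * star (twistOp Γ)

theorem star_twistOp (hΓ : IsSelfAdjoint Γ) :
    star (twistOp Γ) = ((1 + I) / 2) • (1 : R) + ((1 - I) / 2) • Γ := by
  simp [twistOp, star_smul, hΓ.star_eq, sub_eq_add_neg]

theorem twistOp_mem_unitary (hΓ : IsSelfAdjoint Γ) (hΓ2 : Γ * Γ = 1) :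
    twistOp Γ ∈ unitary R := by
  rw [Unitary.mem_iff, star_twistOp hΓ, twistOp]
  constructor <;>
  · simp only [add_mul, mul_add, smul_mul_assoc, mul_smul_comm, one_mul, mul_one, hΓ2]
    match_scalars <;> ring_nf <;> norm_num [I_sq]

theorem star_twistOp_mul_mul_twistOp_of_odd (hΓ : IsSelfAdjoint Γ) (hΓ2 : Γ * Γ = 1) {A : R}
    (hA : Γ * A * Γ = -A) : star (twistOp Γ) * A * twistOp Γ = I • (A * Γ) := by
  rw [star_twistOp hΓ, twistOp]
  simp only [add_mul, mul_add, smul_mul_assoc, mul_smul_comm, one_mul, mul_one,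
    mul_eq_neg_mul_of_conj_eq_neg hΓ2 hA, neg_mul, mul_assoc, hΓ2]
  match_scalars <;> ring_nf

theorem odd_mem_centralizer_twistConj_iff (hΓ : IsSelfAdjoint Γ) (hΓ2 : Γ * Γ = 1) {S : Set R}
    {A : R} (hA : Γ * A * Γ = -A) :
    A ∈ centralizer (twistConj Γ '' S) ↔ A * Γ ∈ centralizer S := by
  unfold twistConj
  rw [mem_centralizer_image_conj_iff (twistOp_mem_unitary hΓ hΓ2),
    star_twistOp_mul_mul_twistOp_of_odd hΓ hΓ2 hA, smul_mem_centralizer_iff I_ne_zero]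

end Twist

section OddElements

variable {R : Type*} [Ring R] [StarRing R] [Algebra ℂ R] [StarModule ℂ R] {Γ V : R}
  {P Q : Set R}

theorem mul_mem_centralizer_inter_of_odd_mem_twisted (hΓ : IsSelfAdjoint Γ) (hΓ2 : Γ * Γ = 1)
    (hΓV : Γ * V ∈ centralizer P) (hVQ : V ∈ centralizer Q) (hVΓ : Commute V Γ) {A : R}
    (hA : A ∈ centralizer (twistConj Γ '' P) ∩ centralizer Q) (hodd : Γ * A * Γ = -A) :
    A * V ∈ centralizer P ∩ centralizer Q ∧ Γ * (A * V) * Γ = -(A * V) := by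
  have hAΓ := (odd_mem_centralizer_twistConj_iff hΓ hΓ2 hodd).1 hA.1
  have hAV : A * Γ * (Γ * V) = A * V := by rw [mul_assoc, ← mul_assoc Γ, hΓ2, one_mul]
  exact ⟨⟨hAV ▸ mul_mem_centralizer hAΓ hΓV, mul_mem_centralizer hA.2 hVQ⟩,
    conj_mul_eq_neg_of_commute hodd hVΓ⟩

theorem mul_star_mem_twisted_of_odd_mem_centralizer_inter (hΓ : IsSelfAdjoint Γ) (hΓ2 : Γ * Γ = 1)
    (hP : ∀ b ∈ P, star b ∈ P) (hQ : ∀ b ∈ Q, star b ∈ Q)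
    (hΓV : Γ * V ∈ centralizer P) (hVQ : V ∈ centralizer Q) (hVΓ : Commute V Γ) {B : R}
    (hB : B ∈ centralizer P ∩ centralizer Q) (hodd : Γ * B * Γ = -B) :
    B * star V ∈ centralizer (twistConj Γ '' P) ∩ centralizer Q ∧
      Γ * (B * star V) * Γ = -(B * star V) := by
  have hodd' : Γ * (B * star V) * Γ = -(B * star V) :=
    conj_mul_eq_neg_of_commute hodd (hΓ.star_eq ▸ hVΓ.star_star)
  have hBVΓ : B * star V * Γ = B * star (Γ * V) := by rw [star_mul, hΓ.star_eq, mul_assoc]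
  refine ⟨⟨(odd_mem_centralizer_twistConj_iff hΓ hΓ2 hodd').2 ?_,
    mul_mem_centralizer hB.2 (star_mem_centralizer' hQ hVQ)⟩, hodd'⟩
  exact hBVΓ ▸ mul_mem_centralizer hB.1 (star_mem_centralizer' hP hΓV)

end OddElements

theorem bijOn_mul_right_of_mem_unitary {R : Type*} [Monoid R] [StarMul R] {V : R}
    (hV : V ∈ unitary R) {s t : Set R} (hst : MapsTo (· * V) s t) (hts : MapsTo (· * star V) t s) :
    BijOn (· * V) s t :=
  InvOn.bijOn ⟨fun A _ => by simp [mul_assoc, Unitary.mul_star_self_of_mem hV],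
    fun B _ => by simp [mul_assoc, Unitary.star_mul_self_of_mem hV]⟩ hst hts

theorem odd_twisted_untwisted_bijection_general
    (Γ : H →L[ℂ] H) (hΓsa : ContinuousLinearMap.adjoint Γ = Γ) (hΓ2 : Γ * Γ = 1)
    (Z : H →L[ℂ] H)
    (hZ : Z = ((1 - Complex.I) / 2) • (1 : H →L[ℂ] H) + ((1 + Complex.I) / 2) • Γ)
    (P Q : VonNeumannAlgebra H)
    (V : H →L[ℂ] H) (hV : IsLeftDisorder Γ P Q V)
    -- the twisted local field algebra F = (P^t)' ∩ Q'
    -- and the untwisted local algebra Uloc = P' ∩ Q'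
    (F Uloc : Set (H →L[ℂ] H))
    (hF : F = Set.centralizer
        ((fun B => Z * B * ContinuousLinearMap.adjoint Z) '' (P : Set (H →L[ℂ] H)))
      ∩ Set.centralizer (Q : Set (H →L[ℂ] H)))
    (hUloc : Uloc = Set.centralizer (P : Set (H →L[ℂ] H))
      ∩ Set.centralizer (Q : Set (H →L[ℂ] H))) :
    (∀ A ∈ F, Γ * A * Γ = -A → A * V ∈ Uloc ∧ Γ * (A * V) * Γ = -(A * V)) ∧
    (∀ B ∈ Uloc, Γ * B * Γ = -B →
      B * ContinuousLinearMap.adjoint V ∈ F ∧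
      Γ * (B * ContinuousLinearMap.adjoint V) * Γ = -(B * ContinuousLinearMap.adjoint V)) ∧
    Set.BijOn (fun A => A * V)
      {A : H →L[ℂ] H | A ∈ F ∧ Γ * A * Γ = -A}
      {B : H →L[ℂ] H | B ∈ Uloc ∧ Γ * B * Γ = -B} := by
  obtain ⟨⟨hV₁, hV₂⟩, hVΓ, hVP, hVQ⟩ := hV
  simp only [← ContinuousLinearMap.star_eq_adjoint] at hΓsa hV₁ hV₂ hVP hVQ hF ⊢
  subst hZ hF hUloc
  have hΓV := mul_mem_centralizer_of_conj_eq hΓ2 hV₁ hVP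
  have hVQ' := mem_centralizer_of_conj_eq hV₁ hVQ
  have forward (A : H →L[ℂ] H)
      (hA : A ∈ centralizer (twistConj Γ '' (P : Set _)) ∩ centralizer Q) :=
    mul_mem_centralizer_inter_of_odd_mem_twisted hΓsa hΓ2 hΓV hVQ' hVΓ hA
  have backward (B : H →L[ℂ] H) (hB : B ∈ centralizer (P : Set _) ∩ centralizer Q) :=
    mul_star_mem_twisted_of_odd_mem_centralizer_inter hΓsa hΓ2 (fun _ => star_mem)
      (fun _ => star_mem) hΓV hVQ' hVΓ hB
  exact ⟨forward, backward, bijOn_mul_right_of_mem_unitary ⟨hV₁, hV₂⟩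
    (fun A hA => forward A hA.1 hA.2) (fun B hB => backward B hB.1 hB.2)⟩

/-- Suppose `V` is a left disorder operator. If `A ∈ F = (P^t)' ∩ Q'` is odd,
then `AV` lies in `P' ∩ Q'` and is odd; conversely, if `B ∈ P' ∩ Q'` is odd, then `BV*` lies in
`F` and is odd. Hence right multiplication by `V` is a bijection from the odd elements of the
twisted local algebra `F` onto the odd elements of the untwisted local algebra `P' ∩ Q'`. -/
theorem odd_twisted_untwisted_bijection
    (Γ : H →L[ℂ] H) (hΓsa : ContinuousLinearMap.adjoint Γ = Γ) (hΓ2 : Γ * Γ = 1)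
    (Z : H →L[ℂ] H)
    (hZ : Z = ((1 - Complex.I) / 2) • (1 : H →L[ℂ] H) + ((1 + Complex.I) / 2) • Γ)
    (P Q : VonNeumannAlgebra H)
    (hPΓ : ∀ A ∈ P, Γ * A * Γ ∈ P) (hQΓ : ∀ A ∈ Q, Γ * A * Γ ∈ Q)
    (hPQ : (P : Set (H →L[ℂ] H)) ⊆ Set.centralizer (Q : Set (H →L[ℂ] H)))
    (V : H →L[ℂ] H) (hV : IsLeftDisorder Γ P Q V)
    -- the twisted local field algebra F = (P^t)' ∩ Q'
    -- and the untwisted local algebra Uloc = P' ∩ Q'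
    (F Uloc : Set (H →L[ℂ] H))
    (hF : F = Set.centralizer
        ((fun B => Z * B * ContinuousLinearMap.adjoint Z) '' (P : Set (H →L[ℂ] H)))
      ∩ Set.centralizer (Q : Set (H →L[ℂ] H)))
    (hUloc : Uloc = Set.centralizer (P : Set (H →L[ℂ] H))
      ∩ Set.centralizer (Q : Set (H →L[ℂ] H))) :
    (∀ A ∈ F, Γ * A * Γ = -A → A * V ∈ Uloc ∧ Γ * (A * V) * Γ = -(A * V)) ∧
    (∀ B ∈ Uloc, Γ * B * Γ = -B →
      B * ContinuousLinearMap.adjoint V ∈ F ∧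
      Γ * (B * ContinuousLinearMap.adjoint V) * Γ = -(B * ContinuousLinearMap.adjoint V)) ∧
    Set.BijOn (fun A => A * V)
      {A : H →L[ℂ] H | A ∈ F ∧ Γ * A * Γ = -A}
      {B : H →L[ℂ] H | B ∈ Uloc ∧ Γ * B * Γ = -B} :=
  odd_twisted_untwisted_bijection_general Γ hΓsa hΓ2 Z hZ P Q V hV F Uloc hF hUloc
end

section
/- Let S be a bounded self-adjoint operator on a complex Hilbert space H and let ε > 0. Let C := ε⁻¹ · f(S), where f(λ) := sin(ελ) and f(S) is defined via the continuous functional calculus for the self-adjoint operator S. Then ‖C‖ ≤ ε⁻¹, and for every ψ ∈ H one has ‖Sψ − Cψ‖ ≤ ε ‖S²ψ‖. -/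
/-!
Both `S - C` and `ε • S²` are real functions of `S`, namely `l - ε⁻¹ sin (ε l)` and `ε l²`, and
`|λ - sin λ| ≤ λ²` shows that the first is dominated in absolute value by the second. Monotonicity
of the functional calculus turns this into `(S - C)² ≤ ε² S⁴` in the Loewner order, and evaluating
both sides in the quadratic form at `ψ` gives `‖(S - C) ψ‖² ≤ ε² ‖S² ψ‖²`.
-/

namespace Real

lemma abs_sub_sin_le_sq (x : ℝ) : |x - sin x| ≤ x ^ 2 := by
  have hx2 : |x| ^ 2 = x ^ 2 := sq_abs x
  rcases le_total |x| 2 with hsmall | hlarge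
  · calc |x - sin x| ≤ |x| ^ 3 / 6 := abs_sub_sin_le x
      _ ≤ x ^ 2 := by nlinarith [abs_nonneg x]
  · calc |x - sin x| ≤ |x| + |sin x| := abs_sub _ _
      _ ≤ 2 * |x| := by linarith [abs_sin_le_abs (x := x)]
      _ ≤ x ^ 2 := by nlinarith

lemma abs_sub_inv_mul_sin_mul_le {ε : ℝ} (hε : 0 < ε) (x : ℝ) :
    |x - ε⁻¹ * sin (ε * x)| ≤ ε * x ^ 2 := by
  have hfactor : x - ε⁻¹ * sin (ε * x) = ε⁻¹ * (ε * x - sin (ε * x)) := by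
    field_simp
  calc |x - ε⁻¹ * sin (ε * x)| = ε⁻¹ * |ε * x - sin (ε * x)| := by
        rw [hfactor, abs_mul, abs_of_pos (inv_pos.2 hε)]
    _ ≤ ε⁻¹ * (ε * x) ^ 2 := by gcongr; exact abs_sub_sin_le_sq _
    _ = ε * x ^ 2 := by field_simp

end Real

namespace ContinuousLinearMap

variable {𝕜 E F : Type*} [RCLike 𝕜] [NormedAddCommGroup E] [InnerProductSpace 𝕜 E]
  [CompleteSpace E] [NormedAddCommGroup F] [InnerProductSpace 𝕜 F] [CompleteSpace F]

theorem norm_apply_le_of_adjoint_comp_self_le {T U : E →L[𝕜] F}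
    (h : adjoint T ∘L T ≤ adjoint U ∘L U) (x : E) : ‖T x‖ ≤ ‖U x‖ := by
  have := ((le_def _ _).1 h).re_inner_nonneg_left x
  rw [sub_apply, inner_sub_left, map_sub, sub_nonneg, ← apply_norm_sq_eq_inner_adjoint_left,
    ← apply_norm_sq_eq_inner_adjoint_left] at this
  exact pow_le_pow_iff_left₀ (norm_nonneg _) (norm_nonneg _) two_ne_zero |>.1 this

end ContinuousLinearMap

theorem norm_cfc_apply_le_of_abs_le {H : Type*} [NormedAddCommGroup H] [InnerProductSpace ℂ H]
    [CompleteSpace H] {a : H →L[ℂ] H} {f g : ℝ → ℝ} (ψ : H)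
    (h : ∀ x ∈ spectrum ℝ a, |f x| ≤ |g x|)
    (hf : ContinuousOn f (spectrum ℝ a) := by cfc_cont_tac)
    (hg : ContinuousOn g (spectrum ℝ a) := by cfc_cont_tac) :
    ‖cfc f a ψ‖ ≤ ‖cfc g a ψ‖ := by
  refine ContinuousLinearMap.norm_apply_le_of_adjoint_comp_self_le ?_ ψ
  simp only [← ContinuousLinearMap.star_eq_adjoint, (cfc_predicate f a).star_eq,
    (cfc_predicate g a).star_eq, ← ContinuousLinearMap.mul_def, ← cfc_mul f f a, ← cfc_mul g g a]
  exact cfc_mono fun x hx => abs_le_iff_mul_self_le.1 (h x hx)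

/-- Let `S` be a bounded self-adjoint operator on a complex Hilbert space `H`
and `ε > 0`. Let `C := ε⁻¹ · f(S)` where `f(λ) := sin(ελ)` (continuous functional calculus).
Then `‖C‖ ≤ ε⁻¹` and for every `ψ ∈ H` one has `‖Sψ − Cψ‖ ≤ ε ‖S²ψ‖`. -/
theorem sine_approximation_of_selfAdjoint
    {H : Type*} [NormedAddCommGroup H] [InnerProductSpace ℂ H] [CompleteSpace H]
    (S : H →L[ℂ] H) (hS : IsSelfAdjoint S)
    (ε : ℝ) (hε : 0 < ε)
    (C : H →L[ℂ] H) (hC : C = ε⁻¹ • cfc (fun l : ℝ => Real.sin (ε * l)) S) :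
    ‖C‖ ≤ ε⁻¹ ∧ ∀ ψ : H, ‖S ψ - C ψ‖ ≤ ε * ‖(S * S) ψ‖ := by
  have hsin : ‖cfc (fun l : ℝ => Real.sin (ε * l)) S‖ ≤ 1 :=
    norm_cfc_le zero_le_one fun x _ => Real.abs_sin_le_one _
  refine ⟨?_, fun ψ => ?_⟩
  · rw [hC, norm_smul, Real.norm_of_nonneg (inv_nonneg.2 hε.le)]
    exact mul_le_of_le_one_right (inv_nonneg.2 hε.le) hsin
  have hdiff : S - C = cfc (fun l : ℝ => l - ε⁻¹ * Real.sin (ε * l)) S := by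
    rw [cfc_sub (fun l : ℝ => l) _, cfc_id' ℝ S, cfc_const_mul ε⁻¹ (fun l => Real.sin (ε * l)), hC]
  have hsq : ε • (S * S) = cfc (fun l : ℝ => ε * l ^ 2) S := by
    rw [cfc_const_mul ε (· ^ 2), cfc_pow_id S 2, sq]
  calc ‖S ψ - C ψ‖ = ‖cfc (fun l : ℝ => l - ε⁻¹ * Real.sin (ε * l)) S ψ‖ := by
        rw [← hdiff, sub_apply]
    _ ≤ ‖cfc (fun l : ℝ => ε * l ^ 2) S ψ‖ := norm_cfc_apply_le_of_abs_le ψ fun l _ =>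
        (Real.abs_sub_inv_mul_sin_mul_le hε l).trans (le_abs_self _)
    _ = ε * ‖(S * S) ψ‖ := by
        rw [← hsq, smul_apply, norm_smul, Real.norm_of_nonneg hε.le]
end
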